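/- arXiv:2505.23594 — 3 statements merged into one kernel-verified Lean document; each statement's English description precedes it below -/
import Mathlib

section
/- Let x̃, x ∈ ℝ^n have all entries in [x_min, x_max] with 0 < x_min ≤ x_max, let X̃ = diag(x̃), X = diag(x), and let A be an m×n real matrix such that Σ̃ = (A X̃² Aᵀ)^{-1} and Σ = (A X² Aᵀ)^{-1} exist; set ΔΣ = Σ̃ − Σ. Then Tr(Σ^{-1} ΔΣ Σ^{-1} ΔΣ) ≥ (x_min⁴ λ_min²(AAᵀ) / (x_max⁸ λ_max⁴(AAᵀ))) · ‖A(X̃² − X²)Aᵀ‖_HS², and Tr(Σ^{-1} ΔΣ Σ^{-1} ΔΣ) ≤ (x_max⁴ λ_max²(AAᵀ) / (x_min⁸ λ_min⁴(AAᵀ))) · ‖A(X̃² − X²)Aᵀ‖_HS². -/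
open Matrix

/-- Largest eigenvalue of a square real matrix (via its real spectrum). -/
noncomputable def lamMax {n : ℕ} (M : Matrix (Fin n) (Fin n) ℝ) : ℝ := sSup (spectrum ℝ M)

/-- Smallest eigenvalue of a square real matrix (via its real spectrum). -/
noncomputable def lamMin {n : ℕ} (M : Matrix (Fin n) (Fin n) ℝ) : ℝ := sInf (spectrum ℝ M)

/-- Squared Hilbert–Schmidt (Frobenius) norm `‖M‖_HS²`. -/
noncomputable def frobSq {m n : ℕ} (M : Matrix (Fin m) (Fin n) ℝ) : ℝ :=
  ∑ i, ∑ j, (M i j) ^ 2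

/-!
Write `M̃ = A X̃² Aᵀ = Σ̃⁻¹`, `M = A X² Aᵀ = Σ⁻¹` and `D = M̃ - M`. Since
`ΔΣ = M̃⁻¹ - M⁻¹ = -M̃⁻¹ D M⁻¹`, we get `Σ⁻¹ ΔΣ Σ⁻¹ ΔΣ = M (M̃⁻¹ D M̃⁻¹ D) M⁻¹`, whose
trace is `Tr(M̃⁻¹ D M̃⁻¹ D)`. Diagonalising `M̃ = U diag(μ) Uᵀ` and putting `E = Uᵀ D U`, this
trace is `∑ᵢⱼ Eᵢⱼ² / (μᵢ μⱼ)`, while `‖D‖²_HS = ∑ᵢⱼ Eᵢⱼ²`. Comparing the Rayleigh quotients of `M̃` and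
`AAᵀ` puts every `μᵢ` in `[α, β]` with `α = x_min² λ_min(AAᵀ)`, `β = x_max² λ_max(AAᵀ)`, so the
trace lies between `‖D‖²_HS / β²` and `‖D‖²_HS / α²`; the stated constants `α²/β⁴` and `β²/α⁴`
are weaker by the factor `(α/β)²`, resp. `(β/α)²`.
-/

section

variable {ι κ : Type*} [Fintype ι] [Fintype κ]

theorem dotProduct_mulVec_mul_diagonal_mul_transpose [DecidableEq κ] (A : Matrix ι κ ℝ)
    (y : κ → ℝ) (v : ι → ℝ) :
    v ⬝ᵥ ((A * diagonal y * Aᵀ) *ᵥ v) = ∑ j, y j * (Aᵀ *ᵥ v) j ^ 2 := by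
  rw [← mulVec_mulVec, ← mulVec_mulVec, dotProduct_mulVec, ← mulVec_transpose, dotProduct]
  simp only [mulVec_diagonal]
  exact Finset.sum_congr rfl fun j _ => by ring

theorem dotProduct_mulVec_mul_transpose (A : Matrix ι κ ℝ) (v : ι → ℝ) :
    v ⬝ᵥ ((A * Aᵀ) *ᵥ v) = ∑ j, (Aᵀ *ᵥ v) j ^ 2 := by
  classical
  simpa using dotProduct_mulVec_mul_diagonal_mul_transpose A 1 v

theorem trace_conj_mul_conj_mul {R : Type*} [CommSemiring R] (U V P D : Matrix ι ι R) :
    (U * P * V * D * (U * P * V) * D).trace = (P * (V * D * U) * P * (V * D * U)).trace := by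
  rw [show U * P * V * D * (U * P * V) * D = U * (P * (V * D * U) * P * (V * D)) by
    simp only [mul_assoc], trace_mul_comm]
  simp only [mul_assoc]

theorem trace_mul_self_conj {R : Type*} [CommSemiring R] [DecidableEq ι] {U V : Matrix ι ι R}
    (hUV : U * V = 1) (D : Matrix ι ι R) : (D * D).trace = (V * D * U * (V * D * U)).trace := by
  simpa [hUV] using trace_conj_mul_conj_mul U V 1 D

variable [DecidableEq ι]

theorem dotProduct_self_eq_sum_sq_of_mul_transpose_eq_one {U : Matrix ι ι ℝ} (hU : U * Uᵀ = 1)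
    (v : ι → ℝ) : v ⬝ᵥ v = ∑ i, (Uᵀ *ᵥ v) i ^ 2 := by
  simpa [hU] using dotProduct_mulVec_mul_transpose U v

theorem trace_diagonal_mul_diagonal_mul {E : Matrix ι ι ℝ} (hE : E.IsHermitian) (d : ι → ℝ) :
    (diagonal d * E * diagonal d * E).trace = ∑ i, ∑ j, d i * d j * E i j ^ 2 := by
  refine Finset.sum_congr rfl fun i _ => Finset.sum_congr rfl fun j _ => ?_
  have hji : E j i = E i j := by simpa using hE.apply i j
  simp [mul_apply, diagonal, hji]
  ring

theorem trace_mul_self_of_isHermitian {E : Matrix ι ι ℝ} (hE : E.IsHermitian) :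
    (E * E).trace = ∑ i, ∑ j, E i j ^ 2 := by
  simpa using trace_diagonal_mul_diagonal_mul hE 1

theorem trace_diagonal_mul_diagonal_mul_mem_Icc {E : Matrix ι ι ℝ} (hE : E.IsHermitian)
    {d : ι → ℝ} {a b : ℝ} (ha : 0 ≤ a) (hd : ∀ i, d i ∈ Set.Icc a b) :
    a ^ 2 * (E * E).trace ≤ (diagonal d * E * diagonal d * E).trace ∧
      (diagonal d * E * diagonal d * E).trace ≤ b ^ 2 * (E * E).trace := by
  have hprod (i j : ι) : a ^ 2 ≤ d i * d j ∧ d i * d j ≤ b ^ 2 := by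
    obtain ⟨hai, hib⟩ := hd i
    obtain ⟨haj, hjb⟩ := hd j
    exact ⟨sq a ▸ mul_le_mul hai haj ha (ha.trans hai),
      sq b ▸ mul_le_mul hib hjb (ha.trans haj) (ha.trans (hai.trans hib))⟩
  simp only [trace_diagonal_mul_diagonal_mul hE, trace_mul_self_of_isHermitian hE, Finset.mul_sum]
  exact ⟨Finset.sum_le_sum fun i _ => Finset.sum_le_sum fun j _ =>
      mul_le_mul_of_nonneg_right (hprod i j).1 (sq_nonneg _),
    Finset.sum_le_sum fun i _ => Finset.sum_le_sum fun j _ =>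
      mul_le_mul_of_nonneg_right (hprod i j).2 (sq_nonneg _)⟩

namespace Matrix.IsHermitian

variable {H : Matrix ι ι ℝ} (hH : H.IsHermitian)

theorem eigenvectorUnitary_mul_transpose :
    (hH.eigenvectorUnitary : Matrix ι ι ℝ) * (hH.eigenvectorUnitary : Matrix ι ι ℝ)ᵀ = 1 := by
  simpa [star_eq_conjTranspose, conjTranspose_eq_transpose_of_trivial] using
    Unitary.coe_mul_star_self hH.eigenvectorUnitary

theorem transpose_mul_eigenvectorUnitary :
    (hH.eigenvectorUnitary : Matrix ι ι ℝ)ᵀ * (hH.eigenvectorUnitary : Matrix ι ι ℝ) = 1 := by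
  simpa [star_eq_conjTranspose, conjTranspose_eq_transpose_of_trivial] using
    Unitary.coe_star_mul_self hH.eigenvectorUnitary

theorem eq_eigenvectorUnitary_mul_diagonal_mul_transpose :
    H = hH.eigenvectorUnitary * diagonal hH.eigenvalues *
      (hH.eigenvectorUnitary : Matrix ι ι ℝ)ᵀ := by
  conv_lhs => rw [hH.spectral_theorem]
  simp [Unitary.conjStarAlgAut_apply, star_eq_conjTranspose, conjTranspose_eq_transpose_of_trivial,
    RCLike.ofReal_real_eq_id]

theorem inv_eq_eigenvectorUnitary_mul_diagonal_mul_transpose (h : ∀ i, hH.eigenvalues i ≠ 0) :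
    H⁻¹ = hH.eigenvectorUnitary * diagonal (fun i => (hH.eigenvalues i)⁻¹) *
      (hH.eigenvectorUnitary : Matrix ι ι ℝ)ᵀ := by
  refine inv_eq_left_inv ?_
  conv_lhs => arg 2; rw [hH.eq_eigenvectorUnitary_mul_diagonal_mul_transpose]
  simp only [mul_assoc]
  rw [← mul_assoc (_ᵀ), hH.transpose_mul_eigenvectorUnitary, one_mul, ← mul_assoc (diagonal _),
    diagonal_mul_diagonal]
  simp [inv_mul_cancel₀ (h _), hH.eigenvectorUnitary_mul_transpose]

theorem dotProduct_mulVec_mem_Icc {a b : ℝ} (hev : ∀ i, hH.eigenvalues i ∈ Set.Icc a b)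
    (v : ι → ℝ) : a * (v ⬝ᵥ v) ≤ v ⬝ᵥ (H *ᵥ v) ∧ v ⬝ᵥ (H *ᵥ v) ≤ b * (v ⬝ᵥ v) := by
  have hq := dotProduct_mulVec_mul_diagonal_mul_transpose
    (hH.eigenvectorUnitary : Matrix ι ι ℝ) hH.eigenvalues v
  rw [← hH.eq_eigenvectorUnitary_mul_diagonal_mul_transpose] at hq
  rw [hq, dotProduct_self_eq_sum_sq_of_mul_transpose_eq_one hH.eigenvectorUnitary_mul_transpose,
    Finset.mul_sum, Finset.mul_sum]
  exact ⟨Finset.sum_le_sum fun i _ => mul_le_mul_of_nonneg_right (hev i).1 (sq_nonneg _),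
    Finset.sum_le_sum fun i _ => mul_le_mul_of_nonneg_right (hev i).2 (sq_nonneg _)⟩

theorem eigenvalues_mem_Icc_of_dotProduct_mulVec {a b : ℝ}
    (h : ∀ v : ι → ℝ, a * (v ⬝ᵥ v) ≤ v ⬝ᵥ (H *ᵥ v) ∧ v ⬝ᵥ (H *ᵥ v) ≤ b * (v ⬝ᵥ v)) (i : ι) :
    hH.eigenvalues i ∈ Set.Icc a b := by
  set w : ι → ℝ := ⇑(hH.eigenvectorBasis i)
  have hw : w ⬝ᵥ w = 1 := by
    simpa [mul_apply, dotProduct] using congrFun (congrFun hH.transpose_mul_eigenvectorUnitary i) i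
  have hHw : w ⬝ᵥ (H *ᵥ w) = hH.eigenvalues i := by
    rw [hH.mulVec_eigenvectorBasis, dotProduct_smul, hw, smul_eq_mul, mul_one]
  simpa [hw, hHw] using h w

theorem trace_inv_mul_inv_mul_mem_Icc {a b : ℝ} (ha : 0 < a) (hab : a ≤ b)
    (hev : ∀ i, hH.eigenvalues i ∈ Set.Icc a b) {D : Matrix ι ι ℝ} (hD : D.IsHermitian) :
    (D * D).trace / b ^ 2 ≤ (H⁻¹ * D * H⁻¹ * D).trace ∧
      (H⁻¹ * D * H⁻¹ * D).trace ≤ (D * D).trace / a ^ 2 := by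
  set U : Matrix ι ι ℝ := (hH.eigenvectorUnitary : Matrix ι ι ℝ)
  have hE : (Uᵀ * D * U).IsHermitian := by
    simpa [conjTranspose_eq_transpose_of_trivial] using isHermitian_conjTranspose_mul_mul U hD
  have hinv : ∀ i, (hH.eigenvalues i)⁻¹ ∈ Set.Icc b⁻¹ a⁻¹ := fun i =>
    ⟨inv_anti₀ (ha.trans_le (hev i).1) (hev i).2, inv_anti₀ ha (hev i).1⟩
  obtain ⟨hlo, hhi⟩ := trace_diagonal_mul_diagonal_mul_mem_Icc hE
    (inv_nonneg.2 (ha.le.trans hab)) hinv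
  rw [hH.inv_eq_eigenvectorUnitary_mul_diagonal_mul_transpose fun i => (ha.trans_le (hev i).1).ne',
    trace_conj_mul_conj_mul, trace_mul_self_conj hH.eigenvectorUnitary_mul_transpose D]
  constructor
  · simpa [div_eq_inv_mul] using hlo
  · simpa [div_eq_inv_mul] using hhi

end Matrix.IsHermitian

end

theorem posDef_mul_transpose_of_isUnit_det {ι κ : Type*} [Fintype ι] [Fintype κ] [DecidableEq ι]
    {A : Matrix ι κ ℝ} {B : Matrix κ κ ℝ} (h : IsUnit (A * B * Aᵀ).det) : (A * Aᵀ).PosDef := by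
  have hinj : Function.Injective A.vecMul := by
    refine Function.Injective.of_comp (f := (B * Aᵀ).vecMul) ?_
    have := vecMul_injective_iff_isUnit.2 ((isUnit_iff_isUnit_det _).2 h)
    simpa only [Function.comp_def, vecMul_vecMul, Matrix.mul_assoc] using this
  simpa [conjTranspose_eq_transpose_of_trivial] using PosDef.mul_conjTranspose_self A hinj

theorem trace_inv_inv_mul_inv_sub_inv_sq {ι R : Type*} [Fintype ι] [DecidableEq ι] [CommRing R]
    {M N : Matrix ι ι R} (hM : IsUnit M.det) (hN : IsUnit N.det) :
    (M⁻¹⁻¹ * (N⁻¹ - M⁻¹) * M⁻¹⁻¹ * (N⁻¹ - M⁻¹)).trace =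
      (N⁻¹ * (N - M) * N⁻¹ * (N - M)).trace := by
  rw [nonsing_inv_nonsing_inv M hM, inv_sub_inv (iff_of_true ((isUnit_iff_isUnit_det _).2 hN)
    ((isUnit_iff_isUnit_det _).2 hM)), ← neg_sub N M]
  rw [show M * (N⁻¹ * -(N - M) * M⁻¹) * M * (N⁻¹ * -(N - M) * M⁻¹) =
      M * (N⁻¹ * (N - M) * (M⁻¹ * M) * N⁻¹ * (N - M) * M⁻¹) by noncomm_ring,
    nonsing_inv_mul M hM, trace_mul_comm]
  simp only [mul_one, mul_assoc, nonsing_inv_mul M hM]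

section SpectralBounds

variable {k : ℕ} {H : Matrix (Fin k) (Fin k) ℝ}

theorem Matrix.IsHermitian.eigenvalues_mem_Icc_lamMin_lamMax (hH : H.IsHermitian) (i : Fin k) :
    hH.eigenvalues i ∈ Set.Icc (lamMin H) (lamMax H) := by
  rw [lamMin, lamMax, hH.spectrum_real_eq_range_eigenvalues]
  exact ⟨csInf_le (Set.finite_range _).bddBelow ⟨i, rfl⟩,
    le_csSup (Set.finite_range _).bddAbove ⟨i, rfl⟩⟩

theorem Matrix.PosDef.lamMin_pos [NeZero k] (hH : H.PosDef) : 0 < lamMin H := by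
  obtain ⟨i, hi⟩ : lamMin H ∈ Set.range hH.1.eigenvalues := by
    rw [lamMin, hH.1.spectrum_real_eq_range_eigenvalues]
    exact (Set.range_nonempty _).csInf_mem (Set.finite_range _)
  exact hi ▸ hH.eigenvalues_pos i

theorem eigenvalues_mul_diagonal_sq_mul_transpose_mem_Icc {κ : Type*} [Fintype κ] [DecidableEq κ]
    {A : Matrix (Fin k) κ ℝ} {x : κ → ℝ} {xmin xmax : ℝ} (hmin : 0 ≤ xmin)
    (hx : ∀ j, x j ∈ Set.Icc xmin xmax) (hM : (A * diagonal x ^ 2 * Aᵀ).IsHermitian) (i : Fin k) :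
    hM.eigenvalues i ∈ Set.Icc (xmin ^ 2 * lamMin (A * Aᵀ)) (xmax ^ 2 * lamMax (A * Aᵀ)) := by
  have hG : (A * Aᵀ).IsHermitian := by
    simpa [conjTranspose_eq_transpose_of_trivial] using isHermitian_mul_conjTranspose_self A
  refine hM.eigenvalues_mem_Icc_of_dotProduct_mulVec (fun v => ?_) i
  obtain ⟨hlo, hhi⟩ := hG.dotProduct_mulVec_mem_Icc hG.eigenvalues_mem_Icc_lamMin_lamMax v
  rw [dotProduct_mulVec_mul_transpose] at hlo hhi
  rw [diagonal_pow, dotProduct_mulVec_mul_diagonal_mul_transpose]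
  have hsq (j : κ) : xmin ^ 2 ≤ x j ^ 2 ∧ x j ^ 2 ≤ xmax ^ 2 :=
    ⟨pow_le_pow_left₀ hmin (hx j).1 2, pow_le_pow_left₀ (hmin.trans (hx j).1) (hx j).2 2⟩
  constructor
  · calc xmin ^ 2 * lamMin (A * Aᵀ) * (v ⬝ᵥ v)
        ≤ xmin ^ 2 * ∑ j, (Aᵀ *ᵥ v) j ^ 2 := by
          rw [mul_assoc]; exact mul_le_mul_of_nonneg_left hlo (sq_nonneg _)
      _ ≤ ∑ j, (x ^ 2) j * (Aᵀ *ᵥ v) j ^ 2 := by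
          rw [Finset.mul_sum]
          exact Finset.sum_le_sum fun j _ => mul_le_mul_of_nonneg_right (hsq j).1 (sq_nonneg _)
  · calc ∑ j, (x ^ 2) j * (Aᵀ *ᵥ v) j ^ 2
        ≤ xmax ^ 2 * ∑ j, (Aᵀ *ᵥ v) j ^ 2 := by
          rw [Finset.mul_sum]
          exact Finset.sum_le_sum fun j _ => mul_le_mul_of_nonneg_right (hsq j).2 (sq_nonneg _)
      _ ≤ xmax ^ 2 * lamMax (A * Aᵀ) * (v ⬝ᵥ v) := by
          rw [mul_assoc]; exact mul_le_mul_of_nonneg_left hhi (sq_nonneg _)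

end SpectralBounds

theorem sq_div_pow_four_mul_le_div_sq {α β F : ℝ} (hα : 0 < α) (hαβ : α ≤ β) (hF : 0 ≤ F) :
    α ^ 2 / β ^ 4 * F ≤ F / β ^ 2 := by
  have hβ := hα.trans_le hαβ
  rw [show α ^ 2 / β ^ 4 * F = (α / β) ^ 2 * (F / β ^ 2) by field_simp]
  exact mul_le_of_le_one_left (by positivity) (pow_le_one₀ (by positivity) ((div_le_one hβ).2 hαβ))

theorem div_sq_le_sq_div_pow_four_mul {α β F : ℝ} (hα : 0 < α) (hαβ : α ≤ β) (hF : 0 ≤ F) :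
    F / α ^ 2 ≤ β ^ 2 / α ^ 4 * F := by
  rw [show β ^ 2 / α ^ 4 * F = (β / α) ^ 2 * (F / α ^ 2) by field_simp]
  exact le_mul_of_one_le_left (by positivity) (one_le_pow₀ ((one_le_div hα).2 hαβ))

theorem trace_quadratic_bounds_general {m n : ℕ} (A : Matrix (Fin m) (Fin n) ℝ)
    (xt x : Fin n → ℝ) (xmin xmax : ℝ) (hmin : 0 < xmin)
    (hxt : ∀ i, xt i ∈ Set.Icc xmin xmax)
    (hinvt : IsUnit (A * (Matrix.diagonal xt) ^ 2 * Aᵀ).det)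
    (hinv : IsUnit (A * (Matrix.diagonal x) ^ 2 * Aᵀ).det) :
    let St := (A * (Matrix.diagonal xt) ^ 2 * Aᵀ)⁻¹
    let S := (A * (Matrix.diagonal x) ^ 2 * Aᵀ)⁻¹
    let dS := St - S
    (xmin ^ 4 * (lamMin (A * Aᵀ)) ^ 2 / (xmax ^ 8 * (lamMax (A * Aᵀ)) ^ 4)) *
        frobSq (A * ((Matrix.diagonal xt) ^ 2 - (Matrix.diagonal x) ^ 2) * Aᵀ) ≤
      (S⁻¹ * dS * S⁻¹ * dS).trace ∧
    (S⁻¹ * dS * S⁻¹ * dS).trace ≤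
      (xmax ^ 4 * (lamMax (A * Aᵀ)) ^ 2 / (xmin ^ 8 * (lamMin (A * Aᵀ)) ^ 4)) *
        frobSq (A * ((Matrix.diagonal xt) ^ 2 - (Matrix.diagonal x) ^ 2) * Aᵀ) := by
  intro St S dS
  rcases Nat.eq_zero_or_pos m with rfl | hm
  · simp [frobSq]
  have : NeZero m := ⟨hm.ne'⟩
  have hsq (y : Fin n → ℝ) : (diagonal y ^ 2).IsHermitian := (isHermitian_diagonal y).pow 2
  have hMt := isHermitian_mul_mul_conjTranspose A (hsq xt)
  have hD := isHermitian_mul_mul_conjTranspose A ((hsq xt).sub (hsq x))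
  rw [conjTranspose_eq_transpose_of_trivial] at hMt hD
  have hev := eigenvalues_mul_diagonal_sq_mul_transpose_mem_Icc hmin.le hxt hMt
  have hα : 0 < xmin ^ 2 * lamMin (A * Aᵀ) :=
    mul_pos (by positivity) (posDef_mul_transpose_of_isUnit_det hinvt).lamMin_pos
  have hαβ := (hev 0).1.trans (hev 0).2
  obtain ⟨hlo, hhi⟩ := hMt.trace_inv_mul_inv_mul_mem_Icc hα hαβ hev hD
  set D := A * (diagonal xt ^ 2 - diagonal x ^ 2) * Aᵀ
  have hF : frobSq D = (D * D).trace := (trace_mul_self_of_isHermitian hD).symm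
  have hFnn : 0 ≤ (D * D).trace := hF ▸ by unfold frobSq; positivity
  have htr : (S⁻¹ * dS * S⁻¹ * dS).trace = _ := trace_inv_inv_mul_inv_sub_inv_sq hinv hinvt
  rw [htr, hF, ← Matrix.sub_mul, ← Matrix.mul_sub]
  constructor
  · calc _ = (xmin ^ 2 * lamMin (A * Aᵀ)) ^ 2 / (xmax ^ 2 * lamMax (A * Aᵀ)) ^ 4 * (D * D).trace :=
          by ring
      _ ≤ _ := sq_div_pow_four_mul_le_div_sq hα hαβ hFnn
      _ ≤ _ := hlo
  · calc _ ≤ _ := hhi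
      _ ≤ (xmax ^ 2 * lamMax (A * Aᵀ)) ^ 2 / (xmin ^ 2 * lamMin (A * Aᵀ)) ^ 4 * (D * D).trace :=
          div_sq_le_sq_div_pow_four_mul hα hαβ hFnn
      _ = _ := by ring

/-- Two-sided bound on `Tr(Σ⁻¹ ΔΣ Σ⁻¹ ΔΣ)` in terms of `‖A(X̃² − X²)Aᵀ‖_HS²`, where
`Σ̃ = (A X̃² Aᵀ)⁻¹`, `Σ = (A X² Aᵀ)⁻¹` and `ΔΣ = Σ̃ − Σ`. -/
theorem trace_quadratic_bounds {m n : ℕ} (A : Matrix (Fin m) (Fin n) ℝ)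
    (xt x : Fin n → ℝ) (xmin xmax : ℝ) (hmin : 0 < xmin) (hmm : xmin ≤ xmax)
    (hxt : ∀ i, xt i ∈ Set.Icc xmin xmax) (hx : ∀ i, x i ∈ Set.Icc xmin xmax)
    (hinvt : IsUnit (A * (Matrix.diagonal xt) ^ 2 * Aᵀ).det)
    (hinv : IsUnit (A * (Matrix.diagonal x) ^ 2 * Aᵀ).det) :
    let St := (A * (Matrix.diagonal xt) ^ 2 * Aᵀ)⁻¹
    let S := (A * (Matrix.diagonal x) ^ 2 * Aᵀ)⁻¹
    let dS := St - S
    (xmin ^ 4 * (lamMin (A * Aᵀ)) ^ 2 / (xmax ^ 8 * (lamMax (A * Aᵀ)) ^ 4)) *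
        frobSq (A * ((Matrix.diagonal xt) ^ 2 - (Matrix.diagonal x) ^ 2) * Aᵀ) ≤
      (S⁻¹ * dS * S⁻¹ * dS).trace ∧
    (S⁻¹ * dS * S⁻¹ * dS).trace ≤
      (xmax ^ 4 * (lamMax (A * Aᵀ)) ^ 2 / (xmin ^ 8 * (lamMin (A * Aᵀ)) ^ 4)) *
        frobSq (A * ((Matrix.diagonal xt) ^ 2 - (Matrix.diagonal x) ^ 2) * Aᵀ) :=
  trace_quadratic_bounds_general A xt x xmin xmax hmin hxt hinvt hinv
end

section
/- Let x̂, x̃, x_o ∈ ℝ^n have entries in [x_min, x_max] with 0 < x_min ≤ x_max, and let A be an m×n real matrix such that Σ̂ = (A X̂² Aᵀ)^{-1}, Σ̃ = (A X̃² Aᵀ)^{-1}, and Σ_o = (A X_o² Aᵀ)^{-1} exist, where X̂ = diag(x̂), X̃ = diag(x̃), X_o = diag(x_o). Then every eigenvalue λ of Σ_o^{-1/2}(Σ̂ − Σ̃)Σ_o^{-1/2} satisfies |λ| ≤ x_max² λ_max²(AAᵀ) ‖x̂² − x̃²‖_∞ / (x_min⁴ λ_min²(AAᵀ)). -/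
open Matrix

/-- Entrywise sup-norm of a vector. -/
noncomputable def supNorm {n : ℕ} (v : Fin n → ℝ) : ℝ := ⨆ i, |v i|

/-- The old Mathlib `Matrix.PosSemidef.sqrt`, spelled out. -/
noncomputable def psdSqrt {n : ℕ} {M : Matrix (Fin n) (Fin n) ℝ} (hA : M.PosSemidef) :
    Matrix (Fin n) (Fin n) ℝ :=
  hA.1.eigenvectorUnitary.1 * diagonal (Real.sqrt ∘ hA.1.eigenvalues) *
    (star hA.1.eigenvectorUnitary : Matrix (Fin n) (Fin n) ℝ)

/-!
Let `v` be an eigenvector for `λ` and `w = Σ₀^{-1/2} v`. The resolvent identity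
`Σ̂ - Σ̃ = Σ̂ (A (X̃² - X̂²) Aᵀ) Σ̃` gives `λ ‖v‖² = ⟪Aᵀ Σ̂ w, (X̃² - X̂²) Aᵀ Σ̃ w⟫`. Every Gram
matrix `A X² Aᵀ` with entries of `x` in `[x_min, x_max]` lies between `x_min² λ_min(AAᵀ)` and
`x_max² λ_max(AAᵀ)` as a quadratic form. Hence `Σ̂` and `Σ̃` have norm at most
`1 / (x_min² λ_min(AAᵀ))`, `Aᵀ` has norm at most `√λ_max(AAᵀ)`, and
`‖w‖² = vᵀ (A X₀² Aᵀ) v ≤ x_max² λ_max(AAᵀ) ‖v‖²`; the diagonal factor contributes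
`‖x̂² - x̃²‖_∞`.
-/

theorem Matrix.isHermitian_mul_transpose_self {ι κ : Type*} [Fintype κ] (A : Matrix ι κ ℝ) :
    (A * Aᵀ).IsHermitian := by
  simpa using isHermitian_mul_conjTranspose_self A

variable {ι κ : Type*} [Fintype ι] [Fintype κ]

theorem dotProduct_self_nonneg (v : ι → ℝ) : 0 ≤ v ⬝ᵥ v :=
  Finset.sum_nonneg fun i _ ↦ mul_self_nonneg (v i)

theorem dotProduct_self_pos {v : ι → ℝ} (hv : v ≠ 0) : 0 < v ⬝ᵥ v :=
  (dotProduct_self_nonneg v).lt_of_ne' (mt dotProduct_self_eq_zero.1 hv)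

theorem dotProduct_sq_le (u v : ι → ℝ) : (u ⬝ᵥ v) ^ 2 ≤ (u ⬝ᵥ u) * (v ⬝ᵥ v) := by
  simpa only [dotProduct, sq] using Finset.sum_mul_sq_le_sq_mul_sq Finset.univ u v

namespace Matrix

theorem nonempty_of_mem_spectrum [DecidableEq ι] {M : Matrix ι ι ℝ} {μ : ℝ} (h : μ ∈ spectrum ℝ M) :
    Nonempty ι :=
  not_isEmpty_iff.1 fun _ ↦ h (isUnit_of_subsingleton _)

theorem exists_mulVec_eq_smul_of_mem_spectrum [DecidableEq ι] {M : Matrix ι ι ℝ} {μ : ℝ}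
    (h : μ ∈ spectrum ℝ M) : ∃ v, v ≠ 0 ∧ M *ᵥ v = μ • v := by
  rw [← spectrum_toLin', ← Module.End.hasEigenvalue_iff_mem_spectrum] at h
  obtain ⟨v, hv⟩ := h.exists_hasEigenvector
  exact ⟨v, hv.2, by simpa using hv.apply_eq_smul⟩

theorem IsHermitian.dotProduct_mulVec_le_of_spectrum_le [DecidableEq ι] {M : Matrix ι ι ℝ}
    (hM : M.IsHermitian) {μ : ℝ} (h : ∀ x ∈ spectrum ℝ M, x ≤ μ) (v : ι → ℝ) :
    v ⬝ᵥ M *ᵥ v ≤ μ * (v ⬝ᵥ v) := by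
  have hpsd : (algebraMap ℝ _ μ - M).PosSemidef := by
    refine posSemidef_iff_isHermitian_and_spectrum_nonneg.2
      ⟨(IsSelfAdjoint.algebraMap _ (.all μ)).sub hM, ?_⟩
    rw [← spectrum.singleton_sub_eq]
    rintro _ ⟨_, rfl, x, hx, rfl⟩
    exact sub_nonneg.2 (h x hx)
  simpa [sub_mulVec, Algebra.algebraMap_eq_smul_one, smul_mulVec, dotProduct_smul] using
    hpsd.dotProduct_mulVec_nonneg v

theorem IsHermitian.mul_dotProduct_le_of_le_spectrum [DecidableEq ι] {M : Matrix ι ι ℝ}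
    (hM : M.IsHermitian) {μ : ℝ} (h : ∀ x ∈ spectrum ℝ M, μ ≤ x) (v : ι → ℝ) :
    μ * (v ⬝ᵥ v) ≤ v ⬝ᵥ M *ᵥ v := by
  have hpsd : (M - algebraMap ℝ _ μ).PosSemidef := by
    refine posSemidef_iff_isHermitian_and_spectrum_nonneg.2
      ⟨hM.sub (IsSelfAdjoint.algebraMap _ (.all μ)), ?_⟩
    rw [← spectrum.sub_singleton_eq]
    rintro _ ⟨x, hx, _, rfl, rfl⟩
    exact sub_nonneg.2 (h x hx)
  simpa [sub_mulVec, Algebra.algebraMap_eq_smul_one, smul_mulVec, dotProduct_smul] using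
    hpsd.dotProduct_mulVec_nonneg v

theorem dotProduct_mul_mul_transpose_mulVec (A : Matrix ι κ ℝ) (D : Matrix κ κ ℝ) (u v : ι → ℝ) :
    u ⬝ᵥ (A * D * Aᵀ) *ᵥ v = (Aᵀ *ᵥ u) ⬝ᵥ D *ᵥ (Aᵀ *ᵥ v) := by
  simp only [← mulVec_mulVec, dotProduct_mulVec, mulVec_transpose]

theorem dotProduct_mul_transpose_mulVec_self (A : Matrix ι κ ℝ) (v : ι → ℝ) :
    v ⬝ᵥ (A * Aᵀ) *ᵥ v = (Aᵀ *ᵥ v) ⬝ᵥ (Aᵀ *ᵥ v) := by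
  rw [← mulVec_mulVec, dotProduct_mulVec, mulVec_transpose]

theorem mul_dotProduct_le_dotProduct_mul_diagonal_mul_transpose [DecidableEq κ]
    (A : Matrix ι κ ℝ) {c : ℝ} {d : κ → ℝ} (hd : ∀ j, c ≤ d j) (v : ι → ℝ) :
    c * (v ⬝ᵥ (A * Aᵀ) *ᵥ v) ≤ v ⬝ᵥ (A * diagonal d * Aᵀ) *ᵥ v := by
  rw [dotProduct_mul_transpose_mulVec_self, dotProduct_mul_mul_transpose_mulVec]
  simp only [dotProduct, mulVec_diagonal, Finset.mul_sum]
  exact Finset.sum_le_sum fun j _ ↦ by nlinarith [hd j, mul_self_nonneg ((Aᵀ *ᵥ v) j)]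

theorem dotProduct_mul_diagonal_mul_transpose_le_mul [DecidableEq κ]
    (A : Matrix ι κ ℝ) {c : ℝ} {d : κ → ℝ} (hd : ∀ j, d j ≤ c) (v : ι → ℝ) :
    v ⬝ᵥ (A * diagonal d * Aᵀ) *ᵥ v ≤ c * (v ⬝ᵥ (A * Aᵀ) *ᵥ v) := by
  rw [dotProduct_mul_transpose_mulVec_self, dotProduct_mul_mul_transpose_mulVec]
  simp only [dotProduct, mulVec_diagonal, Finset.mul_sum]
  exact Finset.sum_le_sum fun j _ ↦ by nlinarith [hd j, mul_self_nonneg ((Aᵀ *ᵥ v) j)]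

theorem PosDef.mul_transpose_self_of_mul_mul_transpose {A : Matrix ι κ ℝ} {D : Matrix κ κ ℝ}
    (h : (A * D * Aᵀ).PosDef) : (A * Aᵀ).PosDef := by
  refine .of_dotProduct_mulVec_pos (isHermitian_mul_transpose_self A) fun u hu ↦ ?_
  have hDu := h.dotProduct_mulVec_pos hu
  rw [star_trivial, dotProduct_mul_mul_transpose_mulVec] at hDu
  rw [star_trivial, dotProduct_mul_transpose_mulVec_self]
  refine dotProduct_self_pos fun h0 ↦ ?_
  simp [h0] at hDu

theorem dotProduct_diagonal_mulVec_sq_le [DecidableEq κ] {d : κ → ℝ} {s : ℝ}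
    (hd : ∀ j, |d j| ≤ s) (y z : κ → ℝ) :
    (y ⬝ᵥ diagonal d *ᵥ z) ^ 2 ≤ s ^ 2 * ((y ⬝ᵥ y) * (z ⬝ᵥ z)) := by
  have habs : |y ⬝ᵥ diagonal d *ᵥ z| ≤ s * ((fun j ↦ |y j|) ⬝ᵥ fun j ↦ |z j|) := by
    simp only [dotProduct, mulVec_diagonal, Finset.mul_sum]
    refine (Finset.abs_sum_le_sum_abs _ _).trans (Finset.sum_le_sum fun j _ ↦ ?_)
    rw [abs_mul, abs_mul, mul_left_comm]
    exact mul_le_mul_of_nonneg_right (hd j) (by positivity)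
  have hcs := dotProduct_sq_le (fun j ↦ |y j|) (fun j ↦ |z j|)
  simp only [dotProduct, abs_mul_abs_self] at hcs
  calc (y ⬝ᵥ diagonal d *ᵥ z) ^ 2 = |y ⬝ᵥ diagonal d *ᵥ z| ^ 2 := (sq_abs _).symm
    _ ≤ (s * ((fun j ↦ |y j|) ⬝ᵥ fun j ↦ |z j|)) ^ 2 := pow_le_pow_left₀ (abs_nonneg _) habs 2
    _ ≤ s ^ 2 * ((y ⬝ᵥ y) * (z ⬝ᵥ z)) := by
      rw [mul_pow]; exact mul_le_mul_of_nonneg_left hcs (sq_nonneg s)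

theorem sq_mul_dotProduct_inv_mulVec_le [DecidableEq ι] {Q : Matrix ι ι ℝ} (hQ : IsUnit Q.det)
    {a : ℝ} (ha : 0 ≤ a) (h : ∀ v, a * (v ⬝ᵥ v) ≤ v ⬝ᵥ Q *ᵥ v) (w : ι → ℝ) :
    a ^ 2 * (Q⁻¹ *ᵥ w ⬝ᵥ Q⁻¹ *ᵥ w) ≤ w ⬝ᵥ w := by
  set u := Q⁻¹ *ᵥ w
  have hQu : Q *ᵥ u = w := by simp [u, mulVec_mulVec, mul_nonsing_inv _ hQ]
  -- `a ‖u‖² ≤ ⟪u, Q u⟫ = ⟪u, w⟫ ≤ ‖u‖ ‖w‖`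
  have hcoer : a * (u ⬝ᵥ u) ≤ u ⬝ᵥ w := hQu ▸ h u
  have hcs := dotProduct_sq_le u w
  rcases (dotProduct_self_nonneg u).eq_or_lt with h0 | hpos
  · rw [← h0, mul_zero]; exact dotProduct_self_nonneg w
  · have : (a * (u ⬝ᵥ u)) ^ 2 ≤ (u ⬝ᵥ w) ^ 2 := pow_le_pow_left₀ (by positivity) hcoer 2
    nlinarith

theorem sq_mul_dotProduct_transpose_inv_mulVec_le [DecidableEq ι] (A : Matrix ι κ ℝ)
    {Q : Matrix ι ι ℝ} (hQ : IsUnit Q.det) {a L : ℝ} (ha : 0 ≤ a) (hL : 0 ≤ L)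
    (hQa : ∀ v, a * (v ⬝ᵥ v) ≤ v ⬝ᵥ Q *ᵥ v) (hAL : ∀ v, v ⬝ᵥ (A * Aᵀ) *ᵥ v ≤ L * (v ⬝ᵥ v))
    (w : ι → ℝ) :
    a ^ 2 * ((Aᵀ *ᵥ (Q⁻¹ *ᵥ w)) ⬝ᵥ (Aᵀ *ᵥ (Q⁻¹ *ᵥ w))) ≤ L * (w ⬝ᵥ w) := by
  rw [← dotProduct_mul_transpose_mulVec_self]
  calc a ^ 2 * ((Q⁻¹ *ᵥ w) ⬝ᵥ (A * Aᵀ) *ᵥ (Q⁻¹ *ᵥ w))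
      ≤ a ^ 2 * (L * ((Q⁻¹ *ᵥ w) ⬝ᵥ (Q⁻¹ *ᵥ w))) := by gcongr; exact hAL _
    _ = L * (a ^ 2 * ((Q⁻¹ *ᵥ w) ⬝ᵥ (Q⁻¹ *ᵥ w))) := by ring
    _ ≤ L * (w ⬝ᵥ w) := by gcongr; exact sq_mul_dotProduct_inv_mulVec_le hQ ha hQa w

theorem dotProduct_inv_sub_inv_mulVec [DecidableEq ι] {Q R : Matrix ι ι ℝ} (hQ : IsUnit Q.det)
    (hR : IsUnit R.det) (hQs : Qᵀ = Q) (w : ι → ℝ) :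
    w ⬝ᵥ (Q⁻¹ - R⁻¹) *ᵥ w = (Q⁻¹ *ᵥ w) ⬝ᵥ (R - Q) *ᵥ (R⁻¹ *ᵥ w) := by
  rw [inv_sub_inv (by simp only [isUnit_iff_isUnit_det, hQ, hR]), ← mulVec_mulVec,
    ← mulVec_mulVec, dotProduct_mulVec, ← mulVec_transpose, transpose_nonsing_inv, hQs]

theorem abs_le_of_mul_dotProduct_eq_dotProduct_diagonal_mulVec [DecidableEq κ] {d y z : κ → ℝ}
    {v : ι → ℝ} {lam s a K : ℝ} (hv : v ≠ 0) (ha : a ≠ 0) (hs : 0 ≤ s) (hd : ∀ j, |d j| ≤ s)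
    (hlam : lam * (v ⬝ᵥ v) = y ⬝ᵥ diagonal d *ᵥ z)
    (hy : a ^ 2 * (y ⬝ᵥ y) ≤ K * (v ⬝ᵥ v)) (hz : a ^ 2 * (z ⬝ᵥ z) ≤ K * (v ⬝ᵥ v)) :
    |lam| ≤ s * K / a ^ 2 := by
  have hvv := dotProduct_self_pos hv
  have hy0 : 0 ≤ a ^ 2 * (y ⬝ᵥ y) := mul_nonneg (sq_nonneg a) (dotProduct_self_nonneg y)
  have hz0 : 0 ≤ a ^ 2 * (z ⬝ᵥ z) := mul_nonneg (sq_nonneg a) (dotProduct_self_nonneg z)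
  have hK : 0 ≤ K := nonneg_of_mul_nonneg_left (hy0.trans hy) hvv
  have hsq : (a ^ 2 * lam * (v ⬝ᵥ v)) ^ 2 ≤ (s * K * (v ⬝ᵥ v)) ^ 2 :=
    calc (a ^ 2 * lam * (v ⬝ᵥ v)) ^ 2 = (a ^ 2) ^ 2 * (y ⬝ᵥ diagonal d *ᵥ z) ^ 2 := by
          rw [mul_assoc, hlam]; ring
      _ ≤ (a ^ 2) ^ 2 * (s ^ 2 * ((y ⬝ᵥ y) * (z ⬝ᵥ z))) := by
          gcongr; exact dotProduct_diagonal_mulVec_sq_le hd y z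
      _ = s ^ 2 * ((a ^ 2 * (y ⬝ᵥ y)) * (a ^ 2 * (z ⬝ᵥ z))) := by ring
      _ ≤ s ^ 2 * ((K * (v ⬝ᵥ v)) * (K * (v ⬝ᵥ v))) := by gcongr
      _ = (s * K * (v ⬝ᵥ v)) ^ 2 := by ring
  have habs := abs_le_of_sq_le_sq hsq (by positivity)
  rw [abs_mul, abs_mul, abs_of_pos hvv, abs_of_nonneg (sq_nonneg a)] at habs
  rw [le_div_iff₀ (by positivity)]
  nlinarith

theorem abs_le_of_mem_spectrum_mul_inv_sub_inv_mul [DecidableEq ι] [DecidableEq κ]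
    (A : Matrix ι κ ℝ) {S Q R : Matrix ι ι ℝ} {d : κ → ℝ} {a b L s lam : ℝ}
    (hS : Sᵀ = S) (hQs : Qᵀ = Q) (hQ : IsUnit Q.det) (hR : IsUnit R.det)
    (hRQ : R - Q = A * diagonal d * Aᵀ) (hs : 0 ≤ s) (hd : ∀ j, |d j| ≤ s) (ha : 0 < a)
    (hQa : ∀ v, a * (v ⬝ᵥ v) ≤ v ⬝ᵥ Q *ᵥ v) (hRa : ∀ v, a * (v ⬝ᵥ v) ≤ v ⬝ᵥ R *ᵥ v)
    (hL : 0 ≤ L) (hAL : ∀ v, v ⬝ᵥ (A * Aᵀ) *ᵥ v ≤ L * (v ⬝ᵥ v))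
    (hSb : ∀ v, (S *ᵥ v) ⬝ᵥ (S *ᵥ v) ≤ b * (v ⬝ᵥ v))
    (hlam : lam ∈ spectrum ℝ (S * (Q⁻¹ - R⁻¹) * S)) :
    |lam| ≤ s * (L * b) / a ^ 2 := by
  obtain ⟨v, hv0, hv⟩ := exists_mulVec_eq_smul_of_mem_spectrum hlam
  have hbound {P : Matrix ι ι ℝ} (hP : IsUnit P.det) (hPa : ∀ v, a * (v ⬝ᵥ v) ≤ v ⬝ᵥ P *ᵥ v) :
      a ^ 2 * ((Aᵀ *ᵥ (P⁻¹ *ᵥ (S *ᵥ v))) ⬝ᵥ (Aᵀ *ᵥ (P⁻¹ *ᵥ (S *ᵥ v)))) ≤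
        L * b * (v ⬝ᵥ v) := by
    rw [mul_assoc]
    exact (sq_mul_dotProduct_transpose_inv_mulVec_le A hP ha.le hL hPa hAL _).trans
      (mul_le_mul_of_nonneg_left (hSb v) hL)
  refine abs_le_of_mul_dotProduct_eq_dotProduct_diagonal_mulVec hv0 ha.ne' hs hd ?_
    (hbound hQ hQa) (hbound hR hRa)
  calc lam * (v ⬝ᵥ v) = v ⬝ᵥ (S * (Q⁻¹ - R⁻¹) * Sᵀ) *ᵥ v := by
        rw [hS, hv, dotProduct_smul, smul_eq_mul]
    _ = (S *ᵥ v) ⬝ᵥ (Q⁻¹ - R⁻¹) *ᵥ (S *ᵥ v) := by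
        rw [dotProduct_mul_mul_transpose_mulVec, hS]
    _ = _ := by
        rw [dotProduct_inv_sub_inv_mulVec hQ hR hQs, hRQ, dotProduct_mul_mul_transpose_mulVec]

end Matrix

section Fin

variable {k : ℕ}

theorem le_lamMax {M : Matrix (Fin k) (Fin k) ℝ} {x : ℝ} (hx : x ∈ spectrum ℝ M) : x ≤ lamMax M :=
  le_csSup M.finite_spectrum.bddAbove hx

theorem lamMin_le {M : Matrix (Fin k) (Fin k) ℝ} {x : ℝ} (hx : x ∈ spectrum ℝ M) : lamMin M ≤ x :=
  csInf_le M.finite_spectrum.bddBelow hx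

theorem Matrix.PosSemidef.lamMax_nonneg {M : Matrix (Fin k) (Fin k) ℝ} (hM : M.PosSemidef) :
    0 ≤ lamMax M :=
  Real.sSup_nonneg fun _ hx ↦ (posSemidef_iff_isHermitian_and_spectrum_nonneg.1 hM).2 hx

theorem Matrix.PosDef.lamMin_pos_s9 [Nonempty (Fin k)] {M : Matrix (Fin k) (Fin k) ℝ}
    (hM : M.PosDef) : 0 < lamMin M := by
  have hne : (spectrum ℝ M).Nonempty :=
    ⟨_, hM.1.eigenvalues_mem_spectrum_real (Classical.arbitrary _)⟩
  have hmem : lamMin M ∈ spectrum ℝ M := hne.csInf_mem M.finite_spectrum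
  obtain ⟨i, hi⟩ := hM.1.spectrum_real_eq_range_eigenvalues ▸ hmem
  rw [← hi]
  exact hM.eigenvalues_pos i

theorem Matrix.IsHermitian.dotProduct_mulVec_le_lamMax {M : Matrix (Fin k) (Fin k) ℝ}
    (hM : M.IsHermitian) (v : Fin k → ℝ) : v ⬝ᵥ M *ᵥ v ≤ lamMax M * (v ⬝ᵥ v) :=
  hM.dotProduct_mulVec_le_of_spectrum_le (fun _ ↦ le_lamMax) v

theorem Matrix.IsHermitian.lamMin_mul_le_dotProduct_mulVec {M : Matrix (Fin k) (Fin k) ℝ}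
    (hM : M.IsHermitian) (v : Fin k → ℝ) : lamMin M * (v ⬝ᵥ v) ≤ v ⬝ᵥ M *ᵥ v :=
  hM.mul_dotProduct_le_of_le_spectrum (fun _ ↦ lamMin_le) v

theorem mul_lamMin_mul_le_dotProduct_mul_diagonal_mul_transpose [DecidableEq κ]
    (A : Matrix (Fin k) κ ℝ) {c : ℝ} {d : κ → ℝ} (hc : 0 ≤ c) (hd : ∀ j, c ≤ d j)
    (v : Fin k → ℝ) : c * lamMin (A * Aᵀ) * (v ⬝ᵥ v) ≤ v ⬝ᵥ (A * diagonal d * Aᵀ) *ᵥ v := by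
  rw [mul_assoc]
  exact (mul_le_mul_of_nonneg_left
    ((isHermitian_mul_transpose_self A).lamMin_mul_le_dotProduct_mulVec v) hc).trans
    (mul_dotProduct_le_dotProduct_mul_diagonal_mul_transpose A hd v)

theorem dotProduct_mul_diagonal_mul_transpose_le_mul_lamMax [DecidableEq κ]
    (A : Matrix (Fin k) κ ℝ) {c : ℝ} {d : κ → ℝ} (hc : 0 ≤ c) (hd : ∀ j, d j ≤ c)
    (v : Fin k → ℝ) : v ⬝ᵥ (A * diagonal d * Aᵀ) *ᵥ v ≤ c * lamMax (A * Aᵀ) * (v ⬝ᵥ v) := by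
  rw [mul_assoc]
  exact (dotProduct_mul_diagonal_mul_transpose_le_mul A hd v).trans (mul_le_mul_of_nonneg_left
    ((isHermitian_mul_transpose_self A).dotProduct_mulVec_le_lamMax v) hc)

theorem abs_le_supNorm (v : Fin k → ℝ) (i : Fin k) : |v i| ≤ supNorm v :=
  le_ciSup (f := fun i ↦ |v i|) (Set.finite_range _).bddAbove i

theorem supNorm_nonneg (v : Fin k → ℝ) : 0 ≤ supNorm v :=
  Real.iSup_nonneg fun _ ↦ abs_nonneg _

theorem psdSqrt_transpose {M : Matrix (Fin k) (Fin k) ℝ} (hM : M.PosSemidef) :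
    (psdSqrt hM)ᵀ = psdSqrt hM := by
  simp only [psdSqrt, star_eq_conjTranspose, conjTranspose_eq_transpose_of_trivial,
    transpose_mul, transpose_transpose, diagonal_transpose, Matrix.mul_assoc]

theorem psdSqrt_mul_self {M : Matrix (Fin k) (Fin k) ℝ} (hM : M.PosSemidef) :
    psdSqrt hM * psdSqrt hM = M := by
  conv_rhs => rw [hM.1.spectral_theorem, Unitary.conjStarAlgAut_apply]
  have hU := Unitary.coe_star_mul_self hM.1.eigenvectorUnitary
  have hD : diagonal (Real.sqrt ∘ hM.1.eigenvalues) * diagonal (Real.sqrt ∘ hM.1.eigenvalues) =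
      diagonal (RCLike.ofReal ∘ hM.1.eigenvalues) := by
    rw [diagonal_mul_diagonal]
    exact congrArg diagonal (funext fun i ↦ Real.mul_self_sqrt (hM.eigenvalues_nonneg i))
  simp only [psdSqrt, ← hD, Matrix.mul_assoc]
  rw [← Matrix.mul_assoc (star _) _, hU, Matrix.one_mul]

theorem dotProduct_psdSqrt_mulVec_self {M : Matrix (Fin k) (Fin k) ℝ} (hM : M.PosSemidef)
    (v : Fin k → ℝ) : (psdSqrt hM *ᵥ v) ⬝ᵥ (psdSqrt hM *ᵥ v) = v ⬝ᵥ M *ᵥ v := by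
  conv_lhs => rw [← psdSqrt_transpose hM]
  rw [← dotProduct_mul_transpose_mulVec_self, psdSqrt_transpose, psdSqrt_mul_self]

end Fin

theorem abs_eigenvalue_sandwich_bound_general {m n : ℕ} (A : Matrix (Fin m) (Fin n) ℝ)
    (xh xt xo : Fin n → ℝ) (xmin xmax : ℝ) (hmin : 0 < xmin)
    (hxh : ∀ i, xh i ∈ Set.Icc xmin xmax) (hxt : ∀ i, xt i ∈ Set.Icc xmin xmax)
    (hxo : ∀ i, xo i ∈ Set.Icc xmin xmax)
    (hinvh : IsUnit (A * (Matrix.diagonal xh) ^ 2 * Aᵀ).det)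
    (hinvt : IsUnit (A * (Matrix.diagonal xt) ^ 2 * Aᵀ).det)
    (hpos : (A * (Matrix.diagonal xo) ^ 2 * Aᵀ).PosDef) :
    let Sh := (A * (Matrix.diagonal xh) ^ 2 * Aᵀ)⁻¹
    let St := (A * (Matrix.diagonal xt) ^ 2 * Aᵀ)⁻¹
    let sqrtSoInv := psdSqrt hpos.posSemidef
    ∀ lam ∈ spectrum ℝ (sqrtSoInv * (Sh - St) * sqrtSoInv),
      |lam| ≤ xmax ^ 2 * (lamMax (A * Aᵀ)) ^ 2 *
          supNorm (fun i => (xh i) ^ 2 - (xt i) ^ 2) /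
        (xmin ^ 4 * (lamMin (A * Aᵀ)) ^ 2) := by
  intro Sh St S lam hlam
  simp only [Sh, St, diagonal_pow] at hlam hinvh hinvt
  have : Nonempty (Fin m) := nonempty_of_mem_spectrum hlam
  have hW : (A * Aᵀ).PosDef := hpos.mul_transpose_self_of_mul_mul_transpose
  have hsq (x : Fin n → ℝ) (hx : ∀ i, x i ∈ Set.Icc xmin xmax) (i : Fin n) :
      xmin ^ 2 ≤ (x ^ 2) i ∧ (x ^ 2) i ≤ xmax ^ 2 :=
    ⟨pow_le_pow_left₀ hmin.le (hx i).1 2, pow_le_pow_left₀ (hmin.le.trans (hx i).1) (hx i).2 2⟩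
  have hcoer (x : Fin n → ℝ) (hx : ∀ i, x i ∈ Set.Icc xmin xmax) :=
    mul_lamMin_mul_le_dotProduct_mul_diagonal_mul_transpose A (sq_nonneg xmin) (hsq x hx · |>.1)
  have hdiff : A * diagonal (xt ^ 2) * Aᵀ - A * diagonal (xh ^ 2) * Aᵀ =
      A * diagonal (xt ^ 2 - xh ^ 2) * Aᵀ := by
    rw [← Matrix.sub_mul, ← Matrix.mul_sub, diagonal_sub]; rfl
  have hd (i : Fin n) : |(xt ^ 2 - xh ^ 2) i| ≤ supNorm fun i ↦ xh i ^ 2 - xt i ^ 2 := by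
    simpa [abs_sub_comm] using abs_le_supNorm (fun i ↦ xh i ^ 2 - xt i ^ 2) i
  have hSb (v : Fin m → ℝ) : (S *ᵥ v) ⬝ᵥ (S *ᵥ v) ≤ xmax ^ 2 * lamMax (A * Aᵀ) * (v ⬝ᵥ v) := by
    rw [dotProduct_psdSqrt_mulVec_self, diagonal_pow]
    exact dotProduct_mul_diagonal_mul_transpose_le_mul_lamMax A (sq_nonneg xmax)
      (hsq xo hxo · |>.2) v
  refine (abs_le_of_mem_spectrum_mul_inv_sub_inv_mul A (psdSqrt_transpose _)
    (by simp [transpose_mul, Matrix.mul_assoc]) hinvh hinvt hdiff (supNorm_nonneg _) hd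
    (mul_pos (pow_pos hmin 2) hW.lamMin_pos_s9) (hcoer xh hxh) (hcoer xt hxt)
    hW.posSemidef.lamMax_nonneg hW.1.dotProduct_mulVec_le_lamMax hSb hlam).trans_eq ?_
  ring

/-- Every eigenvalue `λ` of `Σ₀^{-1/2}(Σ̂ − Σ̃)Σ₀^{-1/2}` satisfies
`|λ| ≤ x_max² λ_max²(AAᵀ) ‖x̂² − x̃²‖_∞ / (x_min⁴ λ_min²(AAᵀ))`, where
`Σ̂ = (A X̂² Aᵀ)⁻¹`, `Σ̃ = (A X̃² Aᵀ)⁻¹`, and `Σ₀^{-1/2}` is the positive square root of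
`Σ₀⁻¹ = A X₀² Aᵀ` (positive definite, being positive semidefinite and invertible). -/
theorem abs_eigenvalue_sandwich_bound {m n : ℕ} (A : Matrix (Fin m) (Fin n) ℝ)
    (xh xt xo : Fin n → ℝ) (xmin xmax : ℝ) (hmin : 0 < xmin) (hmm : xmin ≤ xmax)
    (hxh : ∀ i, xh i ∈ Set.Icc xmin xmax) (hxt : ∀ i, xt i ∈ Set.Icc xmin xmax)
    (hxo : ∀ i, xo i ∈ Set.Icc xmin xmax)
    (hinvh : IsUnit (A * (Matrix.diagonal xh) ^ 2 * Aᵀ).det)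
    (hinvt : IsUnit (A * (Matrix.diagonal xt) ^ 2 * Aᵀ).det)
    (hpos : (A * (Matrix.diagonal xo) ^ 2 * Aᵀ).PosDef) :
    let Sh := (A * (Matrix.diagonal xh) ^ 2 * Aᵀ)⁻¹
    let St := (A * (Matrix.diagonal xt) ^ 2 * Aᵀ)⁻¹
    let sqrtSoInv := psdSqrt hpos.posSemidef
    ∀ lam ∈ spectrum ℝ (sqrtSoInv * (Sh - St) * sqrtSoInv),
      |lam| ≤ xmax ^ 2 * (lamMax (A * Aᵀ)) ^ 2 *
          supNorm (fun i => (xh i) ^ 2 - (xt i) ^ 2) /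
        (xmin ^ 4 * (lamMin (A * Aᵀ)) ^ 2) :=
  abs_eigenvalue_sandwich_bound_general A xh xt xo xmin xmax hmin hxh hxt hxo hinvh hinvt hpos
end

section
/- Let x̃, x_o ∈ ℝ^n have entries in [x_min, x_max] with 0 < x_min ≤ x_max, let X̃ = diag(x̃), X_o = diag(x_o), and let A be an m×n real matrix such that Σ̃ = (A X̃² Aᵀ)^{-1} and Σ_o = (A X_o² Aᵀ)^{-1} exist; set ΔΣ̃ = Σ̃ − Σ_o. Then the spectral norm satisfies ‖X_o Aᵀ ΔΣ̃ A X_o‖₂ ≤ x_max² σ_max(A)² λ_max(AAᵀ) ‖x_o² − x̃²‖_∞ / (x_min⁴ λ_min²(AAᵀ)). -/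
open Matrix

/-- Spectral (operator) norm of a real matrix: its largest singular value `√(λ_max(M Mᵀ))`. -/
noncomputable def specNorm {m n : ℕ} (M : Matrix (Fin m) (Fin n) ℝ) : ℝ :=
  Real.sqrt (sSup (spectrum ℝ (M * Mᵀ)))

/-!
With `M x = A diag(x)² Aᵀ` we have `ΔΣ̃ = M(x̃)⁻¹ (M(x_o) - M(x̃)) M(x_o)⁻¹` and
`M(x_o) - M(x̃) = A diag(x_o² - x̃²) Aᵀ`. In the Loewner order
`M x ≥ x_min² A Aᵀ ≥ x_min² λ_min(A Aᵀ) I`, so both inverses have operator norm at most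
`(x_min² λ_min(A Aᵀ))⁻¹`. Submultiplicativity of the operator norm, together with
`σ_max(A)² = λ_max(A Aᵀ) = ‖A‖²` and `‖diag v‖ = ‖v‖_∞`, gives the bound.
-/

open scoped MatrixOrder Matrix.Norms.L2Operator

/-- `c ‖v‖² ≤ ⟪v, T v⟫ ≤ ‖v‖ ‖T v‖` gives `c ‖v‖ ≤ ‖T v‖`; apply it to `v = S w`. -/
theorem ContinuousLinearMap.opNorm_le_inv_of_rightInverse_of_coercive {E : Type*}
    [NormedAddCommGroup E] [InnerProductSpace ℝ E] {T S : E →L[ℝ] E}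
    (hTS : Function.RightInverse S T) {c : ℝ} (hc : 0 < c)
    (hT : ∀ v, c * ‖v‖ ^ 2 ≤ inner ℝ v (T v)) : ‖S‖ ≤ c⁻¹ := by
  refine S.opNorm_le_bound (inv_nonneg.2 hc.le) fun w => ?_
  have hquad : c * ‖S w‖ ^ 2 ≤ ‖S w‖ * ‖w‖ :=
    calc c * ‖S w‖ ^ 2 ≤ inner ℝ (S w) (T (S w)) := hT _
      _ = inner ℝ (S w) w := by rw [hTS w]
      _ ≤ ‖S w‖ * ‖w‖ := real_inner_le_norm _ _
  rw [inv_mul_eq_div, le_div_iff₀ hc]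
  rcases (norm_nonneg (S w)).eq_or_lt with h0 | hpos
  · rw [← h0, zero_mul]
    exact norm_nonneg w
  · nlinarith

namespace Matrix

theorem l2_opNorm_transpose {m n : Type*} [Fintype m] [Fintype n] [DecidableEq m]
    [DecidableEq n] (B : Matrix m n ℝ) : ‖Bᵀ‖ = ‖B‖ := by
  rw [← conjTranspose_eq_transpose_of_trivial, l2_opNorm_conjTranspose]

theorem l2_opNorm_mul_transpose_self {m n : Type*} [Fintype m] [Fintype n] [DecidableEq m]
    [DecidableEq n] (B : Matrix m n ℝ) : ‖B * Bᵀ‖ = ‖B‖ ^ 2 := by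
  simpa [conjTranspose_eq_transpose_of_trivial, l2_opNorm_transpose, sq] using
    l2_opNorm_conjTranspose_mul_self Bᵀ

theorem l2_opNorm_transpose_mul_mul_le {m n : Type*} [Fintype m] [Fintype n] [DecidableEq m]
    [DecidableEq n] (B : Matrix m n ℝ) (S : Matrix m m ℝ) : ‖Bᵀ * S * B‖ ≤ ‖S‖ * ‖B‖ ^ 2 :=
  calc ‖Bᵀ * S * B‖ ≤ ‖Bᵀ‖ * ‖S‖ * ‖B‖ :=
        (l2_opNorm_mul _ _).trans (mul_le_mul_of_nonneg_right (l2_opNorm_mul _ _) (norm_nonneg _))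
    _ = ‖S‖ * ‖B‖ ^ 2 := by rw [l2_opNorm_transpose]; ring

theorem sSup_spectrum_eq_l2_opNorm {n : Type*} [Fintype n] [DecidableEq n]
    {P : Matrix n n ℝ} (hP : P.PosSemidef) : sSup (spectrum ℝ P) = ‖P‖ := by
  rcases isEmpty_or_nonempty n with hn | hn
  · simp [spectrum.of_subsingleton, Subsingleton.elim P 0]
  obtain ⟨⟨x, hx, hxP⟩, hbound⟩ :=
    IsometricContinuousFunctionalCalculus.isGreatest_norm_spectrum (𝕜 := ℝ) P
      hP.isHermitian.isSelfAdjoint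
  have hx0 : 0 ≤ x := spectrum_nonneg_of_nonneg (nonneg_iff_posSemidef.2 hP) hx
  refine IsGreatest.csSup_eq ⟨?_, fun y hy => (le_abs_self y).trans (hbound ⟨y, hy, rfl⟩)⟩
  rw [← hxP]
  simpa only [Real.norm_of_nonneg hx0] using hx

theorem sSup_spectrum_mul_transpose_self {m n : Type*} [Fintype m] [Fintype n] [DecidableEq m]
    [DecidableEq n] (B : Matrix m n ℝ) : sSup (spectrum ℝ (B * Bᵀ)) = ‖B‖ ^ 2 := by
  have hB : (B * Bᵀ).PosSemidef := by
    simpa [conjTranspose_eq_transpose_of_trivial] using posSemidef_self_mul_conjTranspose B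
  rw [sSup_spectrum_eq_l2_opNorm hB, l2_opNorm_mul_transpose_self]

theorem l2_opNorm_inv_le_of_algebraMap_le {n : Type*} [Fintype n] [DecidableEq n]
    {M : Matrix n n ℝ} (hM : IsUnit M.det) {c : ℝ} (hc : 0 < c) (h : algebraMap ℝ _ c ≤ M) :
    ‖M⁻¹‖ ≤ c⁻¹ := by
  refine ContinuousLinearMap.opNorm_le_inv_of_rightInverse_of_coercive
    (T := toEuclideanCLM (𝕜 := ℝ) M) (fun w => ?_) hc fun v => ?_
  · apply WithLp.ofLp_injective
    simp [ofLp_toEuclideanCLM, mulVec_mulVec, mul_nonsing_inv _ hM]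
  · have hv := (le_iff.1 h).dotProduct_mulVec_nonneg v.ofLp
    rw [inner_toEuclideanCLM, EuclideanSpace.real_norm_sq_eq]
    simpa [sub_mulVec, Algebra.algebraMap_eq_smul_one, smul_mulVec, dotProduct, Finset.mul_sum,
      sq, mul_sub, Finset.sum_sub_distrib, mul_left_comm c] using hv

theorem smul_mul_transpose_le_mul_diagonal_mul_transpose {m n : Type*} [Fintype m] [Fintype n]
    [DecidableEq n] (A : Matrix m n ℝ) {a : ℝ} {x : n → ℝ} (hx : ∀ i, a ≤ x i) :
    a • (A * Aᵀ) ≤ A * diagonal x * Aᵀ := by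
  have hD : (diagonal x - a • 1).PosSemidef := by
    rw [smul_one_eq_diagonal, diagonal_sub]
    exact posSemidef_diagonal_iff.2 fun i => sub_nonneg.2 (hx i)
  have hdiff : A * diagonal x * Aᵀ - a • (A * Aᵀ) = A * (diagonal x - a • 1) * Aᴴ := by
    rw [conjTranspose_eq_transpose_of_trivial, Matrix.mul_sub, Matrix.sub_mul, Matrix.mul_smul,
      Matrix.smul_mul, Matrix.mul_one]
  rw [le_iff, hdiff]
  exact hD.mul_mul_conjTranspose_same A

theorem l2_opNorm_inv_mul_diagonal_mul_transpose_le {m n : Type*} [Fintype m] [Fintype n]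
    [DecidableEq m] [DecidableEq n] (A : Matrix m n ℝ) {r a : ℝ} (hr : 0 < r)
    (hAA : algebraMap ℝ _ r ≤ A * Aᵀ) (ha : 0 < a) {x : n → ℝ} (hx : ∀ i, a ≤ x i)
    (hM : IsUnit (A * diagonal x * Aᵀ).det) : ‖(A * diagonal x * Aᵀ)⁻¹‖ ≤ (a * r)⁻¹ :=
  l2_opNorm_inv_le_of_algebraMap_le hM (mul_pos ha hr) <|
    calc algebraMap ℝ _ (a * r) = a • algebraMap ℝ (Matrix m m ℝ) r := by
          rw [Algebra.smul_def, map_mul]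
      _ ≤ a • (A * Aᵀ) := smul_le_smul_of_nonneg_left hAA ha.le
      _ ≤ A * diagonal x * Aᵀ := smul_mul_transpose_le_mul_diagonal_mul_transpose A hx

theorem l2_opNorm_inv_sub_inv_le {m n : Type*} [Fintype m] [Fintype n] [DecidableEq m]
    [DecidableEq n] (A : Matrix m n ℝ) {r a : ℝ} (hr : 0 < r) (hAA : algebraMap ℝ _ r ≤ A * Aᵀ)
    (ha : 0 < a) {x y : n → ℝ} (hx : ∀ i, a ≤ x i) (hy : ∀ i, a ≤ y i)
    (hMx : IsUnit (A * diagonal x * Aᵀ).det) (hMy : IsUnit (A * diagonal y * Aᵀ).det) :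
    ‖(A * diagonal x * Aᵀ)⁻¹ - (A * diagonal y * Aᵀ)⁻¹‖ ≤ ‖y - x‖ * ‖A‖ ^ 2 / (a * r) ^ 2 := by
  have hdiff : A * diagonal y * Aᵀ - A * diagonal x * Aᵀ = (Aᵀ)ᵀ * diagonal (y - x) * Aᵀ := by
    rw [transpose_transpose, ← Matrix.sub_mul, ← Matrix.mul_sub, diagonal_sub]
    rfl
  rw [inv_sub_inv (iff_of_true ((isUnit_iff_isUnit_det _).2 hMx) ((isUnit_iff_isUnit_det _).2 hMy)),
    hdiff]
  have hmid := l2_opNorm_transpose_mul_mul_le Aᵀ (diagonal (y - x))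
  rw [l2_opNorm_diagonal, l2_opNorm_transpose] at hmid
  calc _ ≤ (a * r)⁻¹ * (‖y - x‖ * ‖A‖ ^ 2) * (a * r)⁻¹ := by
        refine norm_mul₃_le.trans ?_
        gcongr
        exacts [l2_opNorm_inv_mul_diagonal_mul_transpose_le A hr hAA ha hx hMx,
          l2_opNorm_inv_mul_diagonal_mul_transpose_le A hr hAA ha hy hMy]
    _ = _ := by field_simp

theorem posDef_mul_transpose_of_isUnit_det {m n : Type*} [Fintype m] [Fintype n] [DecidableEq m]
    (A : Matrix m n ℝ) (D : Matrix n n ℝ) (h : IsUnit (A * D * Aᵀ).det) : (A * Aᵀ).PosDef := by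
  have hinj : Function.Injective fun v => v ᵥ* (A * D * Aᵀ) :=
    vecMul_injective_iff_isUnit.2 ((isUnit_iff_isUnit_det _).2 h)
  have hA : Function.Injective fun v => v ᵥ* A := by
    refine Function.Injective.of_comp (f := fun u => u ᵥ* (D * Aᵀ)) ?_
    simpa [Function.comp_def, vecMul_vecMul, Matrix.mul_assoc] using hinj
  simpa [conjTranspose_eq_transpose_of_trivial] using PosDef.mul_conjTranspose_self A hA

theorem algebraMap_lamMin_le {k : ℕ} {P : Matrix (Fin k) (Fin k) ℝ} (hP : P.IsHermitian) :
    algebraMap ℝ _ (lamMin P) ≤ P :=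
  (algebraMap_le_iff_le_spectrum hP.isSelfAdjoint).2 fun _ hx =>
    csInf_le (finite_spectrum P).bddBelow hx

theorem lamMin_pos {k : ℕ} [NeZero k] {P : Matrix (Fin k) (Fin k) ℝ} (hP : P.PosDef) :
    0 < lamMin P := by
  have hspec := hP.isHermitian.spectrum_real_eq_range_eigenvalues
  have hmem : lamMin P ∈ spectrum ℝ P :=
    Set.Nonempty.csInf_mem (hspec ▸ Set.range_nonempty _) (finite_spectrum P)
  rw [hspec] at hmem
  obtain ⟨i, hi⟩ := hmem
  exact hi ▸ hP.eigenvalues_pos i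

end Matrix

theorem specNorm_eq_l2_opNorm {m n : ℕ} (B : Matrix (Fin m) (Fin n) ℝ) : specNorm B = ‖B‖ := by
  rw [specNorm, sSup_spectrum_mul_transpose_self, Real.sqrt_sq (norm_nonneg B)]

theorem lamMax_mul_transpose_self {m n : ℕ} (B : Matrix (Fin m) (Fin n) ℝ) :
    lamMax (B * Bᵀ) = ‖B‖ ^ 2 :=
  sSup_spectrum_mul_transpose_self B

theorem supNorm_eq_norm {n : ℕ} (v : Fin n → ℝ) : supNorm v = ‖v‖ := by
  refine le_antisymm (Real.iSup_le (fun i => norm_le_pi_norm v i) (norm_nonneg v)) ?_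
  refine (pi_norm_le_iff_of_nonneg (Real.iSup_nonneg fun i => abs_nonneg _)).2 fun i => ?_
  exact le_ciSup (f := fun j => |v j|) (Finite.bddAbove_range _) i

/-- Spectral-norm bound: `‖X₀ Aᵀ ΔΣ̃ A X₀‖₂ ≤ x_max² σ_max(A)² λ_max(AAᵀ) ‖x₀² − x̃²‖_∞ /
(x_min⁴ λ_min²(AAᵀ))`, where `Σ̃ = (A X̃² Aᵀ)⁻¹`, `Σ₀ = (A X₀² Aᵀ)⁻¹`, `ΔΣ̃ = Σ̃ − Σ₀`. -/
theorem specNorm_XADSAX_bound {m n : ℕ} (A : Matrix (Fin m) (Fin n) ℝ)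
    (xt xo : Fin n → ℝ) (xmin xmax : ℝ) (hmin : 0 < xmin) (hmm : xmin ≤ xmax)
    (hxt : ∀ i, xt i ∈ Set.Icc xmin xmax) (hxo : ∀ i, xo i ∈ Set.Icc xmin xmax)
    (hinvt : IsUnit (A * (Matrix.diagonal xt) ^ 2 * Aᵀ).det)
    (hinvo : IsUnit (A * (Matrix.diagonal xo) ^ 2 * Aᵀ).det) :
    let St := (A * (Matrix.diagonal xt) ^ 2 * Aᵀ)⁻¹
    let So := (A * (Matrix.diagonal xo) ^ 2 * Aᵀ)⁻¹
    let dS := St - So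
    specNorm (Matrix.diagonal xo * Aᵀ * dS * A * Matrix.diagonal xo) ≤
      xmax ^ 2 * (specNorm A) ^ 2 * lamMax (A * Aᵀ) *
          supNorm (fun i => (xo i) ^ 2 - (xt i) ^ 2) /
        (xmin ^ 4 * (lamMin (A * Aᵀ)) ^ 2) := by
  intro St So dS
  obtain rfl | hm := Nat.eq_zero_or_pos m
  · -- `lamMin` of the empty matrix is `sInf ∅ = 0`, so the right-hand side is a junk `_ / 0 = 0`.
    have hlam : lamMin (A * Aᵀ) = 0 := by simp [lamMin, spectrum.of_subsingleton]
    rw [Subsingleton.elim dS 0, hlam]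
    simp [specNorm_eq_l2_opNorm]
  have := NeZero.of_pos hm
  have hAApos := posDef_mul_transpose_of_isUnit_det A _ hinvt
  have hlam : 0 < lamMin (A * Aᵀ) := lamMin_pos hAApos
  have hAA := algebraMap_lamMin_le hAApos.isHermitian
  have hsq (x : Fin n → ℝ) (hx : ∀ i, x i ∈ Set.Icc xmin xmax) (i : Fin n) : xmin ^ 2 ≤ (x ^ 2) i :=
    pow_le_pow_left₀ hmin.le (hx i).1 2
  have hdS : ‖dS‖ ≤ ‖xo ^ 2 - xt ^ 2‖ * ‖A‖ ^ 2 / (xmin ^ 2 * lamMin (A * Aᵀ)) ^ 2 := by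
    rw [diagonal_pow] at hinvt hinvo
    have h := l2_opNorm_inv_sub_inv_le A hlam hAA (by positivity) (hsq xt hxt) (hsq xo hxo)
      hinvt hinvo
    rwa [← diagonal_pow, ← diagonal_pow] at h
  have hxo_norm : ‖xo‖ ≤ xmax := (pi_norm_le_iff_of_nonneg (hmin.le.trans hmm)).2 fun i =>
    abs_le.2 ⟨by linarith [(hxo i).1], (hxo i).2⟩
  calc specNorm (diagonal xo * Aᵀ * dS * A * diagonal xo)
      = ‖(A * diagonal xo)ᵀ * dS * (A * diagonal xo)‖ := by
        simp [specNorm_eq_l2_opNorm, transpose_mul, Matrix.mul_assoc]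
    _ ≤ ‖dS‖ * (‖A‖ * ‖xo‖) ^ 2 := by
        refine (l2_opNorm_transpose_mul_mul_le _ _).trans ?_
        gcongr
        simpa only [l2_opNorm_diagonal] using l2_opNorm_mul A (diagonal xo)
    _ ≤ ‖xo ^ 2 - xt ^ 2‖ * ‖A‖ ^ 2 / (xmin ^ 2 * lamMin (A * Aᵀ)) ^ 2 * (‖A‖ * xmax) ^ 2 := by
        gcongr
    _ = _ := by
        rw [specNorm_eq_l2_opNorm, lamMax_mul_transpose_self, supNorm_eq_norm,
          show (fun i => xo i ^ 2 - xt i ^ 2) = xo ^ 2 - xt ^ 2 from rfl]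
        field_simp
end
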